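/- If M ⊆ ℝⁿ is nonempty and reflection-invariant, then the Euclidean projection onto M is orthant-preserving: for all x ∈ ℝⁿ and p ∈ proj_M(x) and each coordinate i, either sgn(x_i) = sgn(p_i), or x_i = 0, or p_i = 0. -/

import Mathlib

/-! Flipping the sign of the `i`-th coordinate of `p` keeps it in `M` and changes `‖p - x‖²`
by `4 x_i p_i`; so if `x_i` and `p_i` had strictly opposite signs, the flipped point would be
strictly closer to `x`, contradicting the minimality of `p`. -/

noncomputable section

def projSet {n : ℕ} (M : Set (EuclideanSpace ℝ (Fin n))) (x : EuclideanSpace ℝ (Fin n)) :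
    Set (EuclideanSpace ℝ (Fin n)) :=
  {p | p ∈ M ∧ ∀ q ∈ M, ‖p - x‖ ≤ ‖q - x‖}

/-- M is reflection-invariant: membership is stable under flipping signs of coordinates. -/
def ReflInvariant {n : ℕ} (M : Set (EuclideanSpace ℝ (Fin n))) : Prop :=
  ∀ x ∈ M, ∀ b : Fin n → ℝ, (∀ i, b i = 1 ∨ b i = -1) →
    (WithLp.toLp 2 (fun i => b i * x i) : EuclideanSpace ℝ (Fin n)) ∈ M

theorem Real.sign_eq_or_eq_zero_or_eq_zero_of_mul_nonneg {a b : ℝ} (h : 0 ≤ a * b) :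
    Real.sign a = Real.sign b ∨ a = 0 ∨ b = 0 := by
  rcases lt_trichotomy a 0 with ha | rfl | ha <;>
    rcases lt_trichotomy b 0 with hb | rfl | hb <;>
    simp_all [Real.sign_of_neg, Real.sign_of_pos] <;> nlinarith

def flipCoord {ι : Type*} [DecidableEq ι] (i : ι) (p : EuclideanSpace ℝ ι) :
    EuclideanSpace ℝ ι :=
  WithLp.toLp 2 (fun j => Function.update (1 : ι → ℝ) i (-1) j * p j)

theorem norm_flipCoord_sub_sq {ι : Type*} [Fintype ι] [DecidableEq ι] (i : ι)
    (p x : EuclideanSpace ℝ ι) :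
    ‖flipCoord i p - x‖ ^ 2 = ‖p - x‖ ^ 2 + 4 * (x i * p i) := by
  have hsum : ∑ j, (‖(flipCoord i p - x) j‖ ^ 2 - ‖(p - x) j‖ ^ 2) = 4 * (x i * p i) := by
    rw [Finset.sum_eq_single i]
    · simp only [flipCoord, PiLp.sub_apply, Function.update_self, neg_mul, one_mul,
        Real.norm_eq_abs, sq_abs]
      ring
    · intro j _ hji
      simp [flipCoord, Function.update_of_ne hji]
    · simp
  rw [EuclideanSpace.norm_sq_eq, EuclideanSpace.norm_sq_eq]
  rw [Finset.sum_sub_distrib] at hsum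
  linarith

theorem ReflInvariant.flipCoord_mem {n : ℕ} {M : Set (EuclideanSpace ℝ (Fin n))}
    (hM : ReflInvariant M) {p : EuclideanSpace ℝ (Fin n)} (hp : p ∈ M) (i : Fin n) :
    flipCoord i p ∈ M := by
  refine hM p hp _ fun j => ?_
  rcases eq_or_ne j i with rfl | hji
  · simp
  · simp [Function.update_of_ne hji]

theorem mul_coord_nonneg_of_mem_projSet {n : ℕ} {M : Set (EuclideanSpace ℝ (Fin n))}
    {x p : EuclideanSpace ℝ (Fin n)} (hp : p ∈ projSet M x) {i : Fin n}
    (hflip : flipCoord i p ∈ M) :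
    0 ≤ x i * p i := by
  have hle : ‖p - x‖ ^ 2 ≤ ‖flipCoord i p - x‖ ^ 2 := by
    gcongr
    exact hp.2 _ hflip
  rw [norm_flipCoord_sub_sq] at hle
  linarith

theorem projection_onto_refl_invariant_is_orthant_preserving_general
    {n : ℕ} (M : Set (EuclideanSpace ℝ (Fin n)))
    (hrefl : ReflInvariant M)
    (x : EuclideanSpace ℝ (Fin n)) (p : EuclideanSpace ℝ (Fin n))
    (hp : p ∈ projSet M x) (i : Fin n) :
    Real.sign (x i) = Real.sign (p i) ∨ x i = 0 ∨ p i = 0 :=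
  Real.sign_eq_or_eq_zero_or_eq_zero_of_mul_nonneg <|
    mul_coord_nonneg_of_mem_projSet hp (hrefl.flipCoord_mem hp.1 i)

theorem projection_onto_refl_invariant_is_orthant_preserving
    {n : ℕ} (M : Set (EuclideanSpace ℝ (Fin n))) (hM : M.Nonempty)
    (hrefl : ReflInvariant M)
    (x : EuclideanSpace ℝ (Fin n)) (p : EuclideanSpace ℝ (Fin n))
    (hp : p ∈ projSet M x) (i : Fin n) :
    Real.sign (x i) = Real.sign (p i) ∨ x i = 0 ∨ p i = 0 :=
  projection_onto_refl_invariant_is_orthant_preserving_general M hrefl x p hp i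

end
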